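/- arXiv:2111.07930 — 7 statements merged into one kernel-verified Lean document; each statement's English description precedes it below -/
import Mathlib

section
/- For a group G and a field k, the multiplication ⋆ on R(k,G) = k[X_g : g ∈ G] defined by α ⋆ β = Σ_u α(u) Π_{g∈G} (gβ)^{u(g)} (where gβ is the action of g on β by relabeling variables X_w ↦ X_{gw}) is associative and has identity element X_{1_G}; i.e., (R(k,G), ⋆) is a monoid. -/
open MvPolynomial

/-!
Write `g • β` for `rename (g * ·) β`. Being an algebra map, `g • -` commutes with substitution,
and `g • (h • γ) = (g * h) • γ`; hence `g • (β ⋆ γ) = (g • β) ⋆ γ`. Associativity follows by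
composing the two substitutions defining `(α ⋆ β) ⋆ γ`. The identity laws hold because
`1 • β = β` and because substituting `X_{g * 1} = X_g` for each `X_g` does nothing.
-/
/-- The multiplication `⋆` on `R(k,G) = k[X_g : g ∈ G]`:
`α ⋆ β = Σ_u α(u) Π_{g∈G} (gβ)^{u(g)}`, where `g` acts on polynomials by
relabeling the variables `X_w ↦ X_{g w}`. -/
noncomputable def RkGmul {k : Type} [Field k] {G : Type} [Group G]
    (α β : MvPolynomial G k) : MvPolynomial G k :=
  MvPolynomial.aeval (fun g : G => MvPolynomial.rename (fun h : G => g * h) β) α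

section RkGmul

variable {k : Type} [Field k] {G : Type} [Group G]

theorem rename_mul_left_RkGmul (g : G) (β γ : MvPolynomial G k) :
    rename (g * ·) (RkGmul β γ) = RkGmul (rename (g * ·) β) γ := by
  rw [RkGmul, RkGmul, aeval_rename, ← AlgHom.comp_apply, comp_aeval]
  congr 2
  funext h
  simp only [Function.comp_apply, rename_rename, mul_assoc]
  rfl

theorem RkGmul_assoc (α β γ : MvPolynomial G k) :
    RkGmul (RkGmul α β) γ = RkGmul α (RkGmul β γ) := by
  rw [RkGmul, RkGmul, ← AlgHom.comp_apply, comp_aeval, RkGmul]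
  simp only [rename_mul_left_RkGmul]
  rfl

theorem X_one_RkGmul (α : MvPolynomial G k) : RkGmul (X 1) α = α := by
  simp only [RkGmul, aeval_X, one_mul]
  exact rename_id_apply α

theorem RkGmul_X_one (α : MvPolynomial G k) : RkGmul α (X 1) = α := by
  simp only [RkGmul, rename_X, mul_one, aeval_X_left_apply]

end RkGmul

theorem RkG_star_monoid {k : Type} [Field k] {G : Type} [Group G] :
    (∀ α β γ : MvPolynomial G k, RkGmul (RkGmul α β) γ = RkGmul α (RkGmul β γ)) ∧
    (∀ α : MvPolynomial G k, RkGmul (MvPolynomial.X (1 : G)) α = α) ∧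
    (∀ α : MvPolynomial G k, RkGmul α (MvPolynomial.X (1 : G)) = α) :=
  ⟨RkGmul_assoc, X_one_RkGmul, RkGmul_X_one⟩
end

section
/- For a group G and a field k, the structure (R(k,G), +, ⋆) is a left near-ring: (R(k,G), +) is an abelian group, (R(k,G), ⋆) is a monoid, and right distributivity (α + β) ⋆ γ = α ⋆ γ + β ⋆ γ holds for all α, β, γ ∈ R(k,G). -/
/-!
`α ⋆ β` substitutes `gβ` for `X_g` in `α`, i.e. it is `bind₁ (g ↦ gβ) α`. Right distributivity is
additivity of substitution, and since substitutions compose, associativity reduces to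
`g(β ⋆ γ) = (gβ) ⋆ γ`, which is the associativity of `G` acting on itself by left multiplication.
-/

open MvPolynomial

section RkGmul

variable {k : Type} [Field k] {G : Type} [Group G]

theorem RkGmul_eq_bind₁ (α β : MvPolynomial G k) :
    RkGmul α β = bind₁ (fun g : G => rename (g * ·) β) α := by
  rw [RkGmul, aeval_eq_bind₁]

theorem add_RkGmul (α β γ : MvPolynomial G k) :
    RkGmul (α + β) γ = RkGmul α γ + RkGmul β γ :=
  map_add _ α β

end RkGmul

/-- `(R(k,G), +, ⋆)` is a left near-ring: `(R(k,G), +)` is an abelian group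
(this is structural for `MvPolynomial`, we record commutativity of `+`),
`(R(k,G), ⋆)` is a monoid with identity `X_{1_G}`, and right distributivity
`(α + β) ⋆ γ = α ⋆ γ + β ⋆ γ` holds. -/
theorem RkG_left_near_ring {k : Type} [Field k] {G : Type} [Group G] :
    (∀ α β : MvPolynomial G k, α + β = β + α) ∧
    (∀ α β γ : MvPolynomial G k, RkGmul (RkGmul α β) γ = RkGmul α (RkGmul β γ)) ∧
    (∀ α : MvPolynomial G k, RkGmul (MvPolynomial.X (1 : G)) α = α) ∧
    (∀ α : MvPolynomial G k, RkGmul α (MvPolynomial.X (1 : G)) = α) ∧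
    (∀ α β γ : MvPolynomial G k, RkGmul (α + β) γ = RkGmul α γ + RkGmul β γ) :=
  ⟨add_comm, RkGmul_assoc, X_one_RkGmul, RkGmul_X_one, add_RkGmul⟩
end

section
/- For every field k and group G, the map Φ : k[G] → R(k,G) sending Σ_g α(g)·g to Σ_g α(g)·X_g is injective, additive, multiplicative (Φ(ab) = Φ(a) ⋆ Φ(b)), and sends 1 to X_{1_G}; i.e., it is an embedding of k[G] into the near-ring R(k,G). -/
/-!
`Φ` is `Finsupp.linearCombination k X`, and the variables `X_g` are linearly independent, so `Φ`
is injective and additive. The product `α ⋆ β` is additive in `α`, and for a monomial of degree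
one it is a translate: `(c X_g) ⋆ β = c · gβ`. So multiplicativity reduces to `a = single g c`,
where `Φ (single g c * b) = c · gΦ(b)` because left multiplication by `g` translates supports.
-/

open MvPolynomial

/-- The canonical map `Φ : k[G] → R(k,G)`, `Σ_g α(g)·g ↦ Σ_g α(g)·X_g`. -/
noncomputable def PhiRkG {k : Type} [Field k] {G : Type} [Group G]
    (a : MonoidAlgebra k G) : MvPolynomial G k :=
  a.coeff.sum fun g c => MvPolynomial.C c * MvPolynomial.X g

variable {k : Type} [Field k] {G : Type} [Group G]

lemma RkGmul_add_left (α α' β : MvPolynomial G k) :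
    RkGmul (α + α') β = RkGmul α β + RkGmul α' β :=
  map_add _ α α'

lemma RkGmul_C_mul_X (c : k) (g : G) (β : MvPolynomial G k) :
    RkGmul (C c * X g) β = C c * rename (g * ·) β := by
  simp [RkGmul, algebraMap_eq]

lemma PhiRkG_eq_linearCombination (a : MonoidAlgebra k G) :
    PhiRkG a = Finsupp.linearCombination k X a.coeff := by
  simp [PhiRkG, Finsupp.linearCombination_apply, smul_eq_C_mul]

lemma PhiRkG_injective : Function.Injective (PhiRkG (k := k) (G := G)) := by
  intro a b h
  simp only [PhiRkG_eq_linearCombination] at h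
  exact MonoidAlgebra.coeff_injective (linearIndependent_X G k h)

lemma PhiRkG_add (a b : MonoidAlgebra k G) : PhiRkG (a + b) = PhiRkG a + PhiRkG b := by
  simp only [PhiRkG_eq_linearCombination, MonoidAlgebra.coeff_add, map_add]

lemma PhiRkG_zero : PhiRkG (0 : MonoidAlgebra k G) = 0 := by
  simp [PhiRkG]

lemma PhiRkG_single (g : G) (c : k) : PhiRkG (MonoidAlgebra.single g c) = C c * X g := by
  simp [PhiRkG]

lemma PhiRkG_single_mul (g : G) (c : k) (b : MonoidAlgebra k G) :
    PhiRkG (MonoidAlgebra.single g c * b) = C c * rename (g * ·) (PhiRkG b) := by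
  induction b using MonoidAlgebra.induction_linear with
  | zero => simp [PhiRkG_zero]
  | add b b' hb hb' => rw [mul_add, PhiRkG_add, hb, hb', PhiRkG_add, map_add, mul_add]
  | single h d =>
    rw [MonoidAlgebra.single_mul_single, PhiRkG_single, PhiRkG_single, map_mul (rename _),
      rename_C, rename_X, C_mul, mul_assoc]

lemma PhiRkG_mul (a b : MonoidAlgebra k G) : PhiRkG (a * b) = RkGmul (PhiRkG a) (PhiRkG b) := by
  induction a using MonoidAlgebra.induction_linear with
  | zero => simp [PhiRkG_zero, RkGmul]
  | add a a' ha ha' => rw [add_mul, PhiRkG_add, ha, ha', PhiRkG_add, RkGmul_add_left]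
  | single g c => rw [PhiRkG_single_mul, PhiRkG_single, RkGmul_C_mul_X]

lemma PhiRkG_one : PhiRkG (1 : MonoidAlgebra k G) = X 1 := by
  simp [MonoidAlgebra.one_def, PhiRkG_single]

/-- `Φ` is an embedding of near-rings: injective, additive, multiplicative,
and it sends `1` to `X_{1_G}`. -/
theorem PhiRkG_embedding {k : Type} [Field k] {G : Type} [Group G] :
    Function.Injective (PhiRkG (k := k) (G := G)) ∧
    (∀ a b : MonoidAlgebra k G, PhiRkG (a + b) = PhiRkG a + PhiRkG b) ∧
    (∀ a b : MonoidAlgebra k G, PhiRkG (a * b) = RkGmul (PhiRkG a) (PhiRkG b)) ∧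
    PhiRkG (1 : MonoidAlgebra k G) = MvPolynomial.X (1 : G) :=
  ⟨PhiRkG_injective, PhiRkG_add, PhiRkG_mul, PhiRkG_one⟩
end

section
/- If G is a surjunctive group and k is any field, then for all α, β ∈ R(k,G) with α ⋆ β = X_{1_G}, one also has β ⋆ α = X_{1_G}; that is, the near-ring R(k,G) is directly finite. -/
open MvPolynomial

/-- A cellular automaton over group `G` and alphabet `A`: a map admitting a
finite memory set `M ⊆ G` and a local defining map `μ : A^M → A` with
`τ(c)(g) = μ((g⁻¹c)|_M)`, where `(gc)(h) = c(g⁻¹h)`. -/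
def IsCellularAutomaton (G : Type) [Group G] (A : Type) (τ : (G → A) → (G → A)) : Prop :=
  ∃ (M : Finset G) (μ : (M → A) → A), ∀ (c : G → A) (g : G),
    τ c g = μ fun m : M => c (g * (m : G))

/-- A group is surjunctive if every injective cellular automaton with finite
alphabet over it is surjective. -/
def Surjunctive (G : Type) [Group G] : Prop :=
  ∀ (A : Type) [Finite A] (τ : (G → A) → (G → A)),
    IsCellularAutomaton G A τ → Function.Injective τ → Function.Surjective τ

/-!
A polynomial `β` defines the cellular automaton `c ↦ (g ↦ β((g⁻¹c)|_{vars β}))` over any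
coefficient ring, and `α ⋆ β` defines the composite of the automata of `α` and `β`. Over a finite
ring, `α ⋆ β = X₁` makes the automaton of `β` injective, hence bijective by surjunctivity, so
`β ⋆ α` acts as the identity. To conclude over an arbitrary field `k`, descend `α, β` to a finitely
generated `ℤ`-subalgebra `A ⊆ k`. A polynomial over `A` vanishing at all points of all finite
fields `A → F` is zero: a polynomial ring over `A` in finitely many variables is a reduced
Jacobson ring whose residue fields are finite, and the polynomial is its own value at the generic
point.
-/

section Automaton

variable {G : Type} [Group G] {S : Type} [CommSemiring S]

/-- `RkGmul` over an arbitrary commutative semiring: the argument passes through finitely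
generated `ℤ`-algebras and their finite residue fields. -/
noncomputable def starMul (α β : MvPolynomial G S) : MvPolynomial G S :=
  aeval (fun g : G => rename (fun h : G => g * h) β) α

noncomputable def cellularMap (β : MvPolynomial G S) (c : G → S) (g : G) : S :=
  eval (fun h => c (g * h)) β

theorem eval_starMul (α β : MvPolynomial G S) (c : G → S) :
    eval c (starMul α β) = eval (cellularMap β c) α := by
  induction α using MvPolynomial.induction_on with
  | C a => simp [starMul]
  | add p q hp hq => simp_all [starMul]
  | mul_X p g hp => simp_all [starMul, cellularMap, eval_rename, Function.comp_def]

theorem cellularMap_apply_one (p : MvPolynomial G S) (c : G → S) :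
    cellularMap p c 1 = eval c p := by
  simp [cellularMap]

theorem cellularMap_starMul (α β : MvPolynomial G S) :
    cellularMap (starMul α β) = cellularMap α ∘ cellularMap β := by
  funext c g
  rw [Function.comp_apply, cellularMap, eval_starMul]
  congr 2
  funext h
  simp only [cellularMap, mul_assoc]

theorem cellularMap_X_one : cellularMap (X (1 : G) : MvPolynomial G S) = id := by
  funext c g
  simp [cellularMap]

theorem isCellularAutomaton_cellularMap (β : MvPolynomial G S) :
    IsCellularAutomaton G S (cellularMap β) := by
  classical
  refine ⟨β.vars, fun x => eval (fun h => if hm : h ∈ β.vars then x ⟨h, hm⟩ else 0) β,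
    fun c g => ?_⟩
  exact eval₂Hom_congr' rfl (fun v hv _ => by simp [hv]) rfl

theorem map_starMul {S' : Type} [CommSemiring S'] (f : S →+* S') (α β : MvPolynomial G S) :
    map f (starMul α β) = starMul (map f α) (map f β) := by
  induction α using MvPolynomial.induction_on with
  | C a => simp [starMul]
  | add p q hp hq => simp_all [starMul]
  | mul_X p g hp => simp_all [starMul, map_rename]

theorem Surjunctive.cellularMap_starMul_eq_id (hG : Surjunctive G) [Finite S]
    {α β : MvPolynomial G S} (h : starMul α β = X 1) :
    cellularMap (starMul β α) = id := by
  have hleft : Function.LeftInverse (cellularMap α) (cellularMap β) := by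
    rw [Function.leftInverse_iff_comp, ← cellularMap_starMul, h, cellularMap_X_one]
  have hsurj := hG S _ (isCellularAutomaton_cellularMap β) hleft.injective
  rw [cellularMap_starMul]
  exact (hleft.rightInverse_of_surjective hsurj).id

end Automaton

instance Int.isJacobsonRing : IsJacobsonRing ℤ := by
  rw [isJacobsonRing_iff_prime_eq]
  intro P hP
  by_cases hbot : P = ⊥
  · subst hbot
    ext x
    simp only [Ideal.mem_jacobson_bot, Ideal.mem_bot]
    refine ⟨fun h => ?_, fun h y => by simp [h]⟩
    rcases Int.isUnit_iff.mp (h 1) with h₁ | h₁ <;>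
      rcases Int.isUnit_iff.mp (h (-1)) with h₂ | h₂ <;> omega
  · have := hP.isMaximal hbot
    exact Ideal.jacobson_eq_self_of_isMaximal

theorem finite_of_finiteType_int (F : Type*) [Field F] [Algebra.FiniteType ℤ F] : Finite F := by
  have : Module.Finite ℤ F := finite_of_finite_type_of_isJacobsonRing ℤ F
  obtain ⟨p, _⟩ := CharP.exists F
  rcases CharP.char_is_prime_or_zero F p with hp | rfl
  · apply Module.finite_of_fg_torsion
    intro x
    refine ⟨⟨p, mem_nonZeroDivisors_of_ne_zero (by exact_mod_cast hp.ne_zero)⟩, ?_⟩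
    change ((p : ℕ) : ℤ) • x = 0
    simp
  · have := CharP.charP_to_charZero F
    exact (Int.not_isField (isField_of_isIntegral_of_isField (algebraMap ℤ F).injective_int
      (Field.toIsField F))).elim

theorem Ideal.finite_quotient_of_finiteType_int {B : Type*} [CommRing B] [Algebra ℤ B]
    [Algebra.FiniteType ℤ B] (J : Ideal B) [J.IsMaximal] : Finite (B ⧸ J) := by
  let := Ideal.Quotient.field J
  have hft := Algebra.FiniteType.of_surjective (Ideal.Quotient.mkₐ ℤ J)
    Ideal.Quotient.mk_surjective
  -- the `ℤ`-algebra structure coming from the field structure is only propositionally the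
  -- quotient one
  have : @Algebra.FiniteType ℤ (B ⧸ J) _ _ (Ring.toIntAlgebra _) := by
    convert hft
    exact Subsingleton.elim _ _
  exact finite_of_finiteType_int (B ⧸ J)

theorem MvPolynomial.eq_zero_of_forall_eval_map_eq_zero {σ : Type} {A : Type} [CommRing A]
    [IsReduced A] [Algebra.FiniteType ℤ A] (p : MvPolynomial σ A)
    (h : ∀ (F : Type) [Field F] [Finite F] (φ : A →+* F) (c : σ → F), eval c (map φ p) = 0) :
    p = 0 := by
  classical
  obtain ⟨s, q, rfl⟩ := exists_finset_rename p
  suffices q = 0 by rw [this, map_zero]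
  have hmax : ∀ J : Ideal (MvPolynomial s A), J.IsMaximal → q ∈ J := by
    intro J hJ
    let := Ideal.Quotient.field J
    have := J.finite_quotient_of_finiteType_int
    have hq := h _ ((Ideal.Quotient.mk J).comp C)
      (fun g => if hg : g ∈ s then Ideal.Quotient.mk J (X ⟨g, hg⟩) else 0)
    have hmk : Ideal.Quotient.mk J =
        eval₂Hom ((Ideal.Quotient.mk J).comp C) (fun v => Ideal.Quotient.mk J (X v)) :=
      ringHom_ext (fun _ => by simp) (fun _ => by simp)
    rw [eval_map, eval₂_rename] at hq
    rw [← Ideal.Quotient.eq_zero_iff_mem, hmk, coe_eval₂Hom, ← hq]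
    congr
    funext v
    simp [v.2]
  have hjac : q ∈ (⊥ : Ideal (MvPolynomial s A)).jacobson :=
    Ideal.mem_sInf.mpr fun J ⟨_, hJ⟩ => hmax J hJ
  rwa [IsJacobsonRing.out (isJacobsonRing_of_finiteType (A := ℤ)) Ideal.isRadical_bot,
    Ideal.mem_bot] at hjac

theorem exists_subalgebra_finiteType_map_eq {R : Type} [CommRing R] {σ : Type}
    (p q : MvPolynomial σ R) :
    ∃ (A : Subalgebra ℤ R) (_ : Algebra.FiniteType ℤ A) (p₀ q₀ : MvPolynomial σ A),
      map (algebraMap A R) p₀ = p ∧ map (algebraMap A R) q₀ = q := by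
  classical
  let A := Algebra.adjoin ℤ ((p.coeffs ∪ q.coeffs : Finset R) : Set R)
  have hrange : ∀ r : MvPolynomial σ R, r.coeffs ⊆ p.coeffs ∪ q.coeffs →
      r ∈ Set.range (map (algebraMap A R)) := fun r hr =>
    mem_range_map_iff_coeffs_subset.mpr fun a ha =>
      ⟨⟨a, Algebra.subset_adjoin (hr ha)⟩, rfl⟩
  obtain ⟨p₀, hp₀⟩ := hrange p Finset.subset_union_left
  obtain ⟨q₀, hq₀⟩ := hrange q Finset.subset_union_right
  exact ⟨A, (Subalgebra.fg_iff_finiteType A).mp (Subalgebra.fg_adjoin_finset _), p₀, q₀, hp₀, hq₀⟩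

/-- For a surjunctive group `G` and any field `k`, the near-ring `R(k,G)` is
directly finite: `α ⋆ β = X_{1_G}` implies `β ⋆ α = X_{1_G}`. -/
theorem RkG_directly_finite {G : Type} [Group G] (hG : Surjunctive G)
    {k : Type} [Field k] (α β : MvPolynomial G k)
    (h : RkGmul α β = MvPolynomial.X (1 : G)) :
    RkGmul β α = MvPolynomial.X (1 : G) := by
  obtain ⟨A, _, α₀, β₀, rfl, rfl⟩ := exists_subalgebra_finiteType_map_eq α β
  have hinj : Function.Injective (map (σ := G) (algebraMap A k)) :=
    map_injective _ Subtype.val_injective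
  change starMul _ _ = X 1 at h ⊢
  rw [← map_starMul, ← map_X (algebraMap A k) (1 : G)] at h ⊢
  refine congrArg _ (sub_eq_zero.mp (eq_zero_of_forall_eval_map_eq_zero _ fun F _ _ φ c => ?_))
  have hφ : starMul (map φ α₀) (map φ β₀) = X 1 := by rw [← map_starMul, hinj h, map_X]
  rw [map_sub, map_starMul, map_X, map_sub, eval_X, ← cellularMap_apply_one,
    hG.cellularMap_starMul_eq_id hφ, id, sub_self]
end

section
/- Let G be a group, A a set, and τ, σ : A^G → A^G cellular automata with common memory set M containing 1_G, local maps μ and η respectively, and σ ∘ τ = Id. Then for every c ∈ A^{M²}, η(τ_M^+(c)) = c(1_G), where τ_M^+ : A^{M²} → A^M is defined by τ_M^+(c)(g) = μ(h ↦ c(gh)) for g ∈ M. -/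
open Pointwise

/-- If `τ, σ` are cellular automata with common memory set `M ∋ 1_G`,
`M = M⁻¹`, local maps `μ, η`, and `σ ∘ τ = Id`, then `η(τ_M^+(c)) = c(1_G)`
for every `c ∈ A^{M²}`. -/
theorem cellularAutomaton_left_inverse_local {G : Type} [Group G] [DecidableEq G]
    {A : Type} (τ σ : (G → A) → (G → A)) (M : Finset G) (h1 : (1 : G) ∈ M)
    (hsymm : M = M⁻¹) (μ η : (M → A) → A)
    (hτ : ∀ (c : G → A) (g : G), τ c g = μ fun m : M => c (g * (m : G)))
    (hσ : ∀ (c : G → A) (g : G), σ c g = η fun m : M => c (g * (m : G)))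
    (h : σ ∘ τ = id)
    (τMplus : ((M * M : Finset G) → A) → (M → A))
    (hplus : ∀ (c : (M * M : Finset G) → A) (g : M),
      τMplus c g = μ fun m : M =>
        c ⟨(g : G) * (m : G), Finset.mul_mem_mul g.2 m.2⟩) :
    ∀ c : (M * M : Finset G) → A,
      η (τMplus c) = c ⟨(1 : G), by simpa using Finset.mul_mem_mul h1 h1⟩ := by
  intro c
  have h11 : (1 : G) ∈ (M * M : Finset G) := by simpa using Finset.mul_mem_mul h1 h1
  set c' : G → A := fun g => if hg : g ∈ (M * M : Finset G) then c ⟨g, hg⟩ else c ⟨1, h11⟩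
    with hc'
  have key : σ (τ c') 1 = c' 1 := by
    have := congrFun (congrFun h c') 1
    simpa using this
  have hc'1 : c' 1 = c ⟨1, h11⟩ := by simp [hc']
  rw [hc'1] at key
  rw [← key, hσ]
  congr 1
  funext m
  rw [hplus, hτ]
  congr 1
  funext m'
  have hmm : (m : G) * (m' : G) ∈ (M * M : Finset G) := Finset.mul_mem_mul m.2 m'.2
  simp [hc', one_mul, hmm]
end

section
/- For every group G, field K, and n ≥ 1, there is a ring isomorphism between Mat_n(K[G]) and the ring LCA(G, K^n) of linear cellular automata τ : (K^n)^G → (K^n)^G, where the multiplication in LCA(G, K^n) is composition of maps and addition is pointwise. -/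
/-- A linear cellular automaton over `G` with alphabet the `K`-vector space
`K^n`. -/
def IsLinearCellularAutomaton (G : Type) [Group G] (K : Type) [Field K] (n : ℕ)
    (τ : (G → (Fin n → K)) → (G → (Fin n → K))) : Prop :=
  ∃ (M : Finset G) (μ : ((M → (Fin n → K)) →ₗ[K] (Fin n → K))),
    ∀ (c : G → (Fin n → K)) (g : G), τ c g = μ fun m : M => c (g * (m : G))

/-!
Right translation `c ↦ c (· * m)` is an action of `G` on `G → V` by linear maps, so it extends
to a `K`-algebra map `K[G] → End (G → V)`. Through `End (ι → V) ≃ Mat_ι (End V)` a matrix `A`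
over `K[G]` then acts on `G → ι → K` by `(A c) g = ∑ₘ A(m) (c (g * m))`, where `A(m)` is the
scalar matrix of `m`-coefficients, and this action is a ring homomorphism. It is a linear
cellular automaton whose memory set is the union of the supports of the entries of `A`; it
determines `A`, since the action on a Dirac configuration at `m` reads off `A(m)`; and a
local rule `μ` with memory set `M` is realised by `∑_{m ∈ M} single m (matrix of μ on slot m)`.
-/

def LinearEquiv.piComm (K : Type*) [Semiring K] (α β : Type*) :
    (α → β → K) ≃ₗ[K] (β → α → K) where
  __ := Equiv.piComm _
  map_add' _ _ := rfl
  map_smul' _ _ := rfl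

open Matrix

namespace MonoidAlgebra

section Support

variable {G K ι : Type*} [Semiring K] [Fintype ι] [DecidableEq G]

def matrixSupport (A : Matrix ι ι (MonoidAlgebra K G)) : Finset G :=
  Finset.univ.biUnion fun p : ι × ι => (A p.1 p.2).coeff.support

theorem support_subset_matrixSupport (A : Matrix ι ι (MonoidAlgebra K G)) (i j : ι) :
    (A i j).coeff.support ⊆ matrixSupport A :=
  Finset.subset_biUnion_of_mem (fun p : ι × ι => (A p.1 p.2).coeff.support)
    (Finset.mem_univ (i, j))

end Support

variable {G K V ι : Type*} [Monoid G] [CommSemiring K] [AddCommMonoid V] [Module K V]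

variable (K V) in
def rightTranslation : G →* Module.End K (G → V) where
  toFun m := LinearMap.funLeft K V (· * m)
  map_one' := by ext; simp
  map_mul' m m' := by ext; simp [mul_assoc]

variable (V) in
noncomputable def convolution : MonoidAlgebra K G →ₐ[K] Module.End K (G → V) :=
  lift K (Module.End K (G → V)) G (rightTranslation K V)

theorem convolution_apply (f : MonoidAlgebra K G) (c : G → V) (g : G) :
    convolution V f c g = f.coeff.sum fun m a => a • c (g * m) := by
  simp [convolution, lift_apply, Finsupp.sum, rightTranslation]

variable [Fintype ι] [DecidableEq ι]

noncomputable def matrixConvolution :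
    Matrix ι ι (MonoidAlgebra K G) →+* Module.End K (G → ι → K) :=
  ((LinearEquiv.piComm K G ι).symm.conjRingEquiv.toRingHom.comp
    (endVecRingEquivMatrixEnd ι K (G → K)).symm.toRingHom).comp
    (convolution K).toRingHom.mapMatrix

theorem matrixConvolution_apply (A : Matrix ι ι (MonoidAlgebra K G)) (c : G → ι → K) (g : G)
    (i : ι) :
    matrixConvolution A c g i = ∑ j, (A i j).coeff.sum fun m a => a * c (g * m) j := by
  change (∑ j, convolution K (A i j) (fun g' => c g' j)) g = _
  simp only [Finset.sum_apply, convolution_apply, smul_eq_mul]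

theorem matrixConvolution_apply_eq_sum {A : Matrix ι ι (MonoidAlgebra K G)} {M : Finset G}
    (hM : ∀ i j, (A i j).coeff.support ⊆ M) (c : G → ι → K) (g : G) :
    matrixConvolution A c g = ∑ m ∈ M, A.map (fun a => a.coeff m) *ᵥ c (g * m) := by
  ext i
  simp only [matrixConvolution_apply, Finset.sum_apply, mulVec, dotProduct, map_apply]
  rw [Finset.sum_comm]
  exact Finset.sum_congr rfl fun j _ => Finsupp.sum_of_support_subset _ (hM i j) _ (by simp)

theorem matrixConvolution_map_single (B : Matrix ι ι K) (m : G) (c : G → ι → K) (g : G) :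
    matrixConvolution (B.map (single m)) c g = B *ᵥ c (g * m) := by
  have hM : ∀ i j, (B.map (single m) i j).coeff.support ⊆ {m} :=
    fun _ _ => Finsupp.support_single_subset
  rw [matrixConvolution_apply_eq_sum hM, Finset.sum_singleton]
  congr
  ext i j
  simp

theorem matrixConvolution_single_single_one [DecidableEq G] (A : Matrix ι ι (MonoidAlgebra K G))
    (m : G) (i j : ι) :
    matrixConvolution A (Pi.single m (Pi.single j 1)) 1 i = (A i j).coeff m := by
  have hM : ∀ i j, (A i j).coeff.support ⊆ insert m (matrixSupport A) :=
    fun i j => (support_subset_matrixSupport A i j).trans (Finset.subset_insert _ _)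
  rw [matrixConvolution_apply_eq_sum hM,
    Finset.sum_eq_single_of_mem m (Finset.mem_insert_self _ _) fun m' _ hm' => by simp [hm']]
  simp

theorem matrixConvolution_injective :
    Function.Injective (matrixConvolution : Matrix ι ι (MonoidAlgebra K G) → _) := by
  classical
  intro A B hAB
  ext i j m
  rw [← matrixConvolution_single_single_one, ← matrixConvolution_single_single_one, hAB]

end MonoidAlgebra

open MonoidAlgebra

section CellularAutomaton

variable {G K : Type} [Group G] [Field K] {n : ℕ}

theorem isLinearCellularAutomaton_matrixConvolution
    (A : Matrix (Fin n) (Fin n) (MonoidAlgebra K G)) :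
    IsLinearCellularAutomaton G K n (matrixConvolution A) := by
  classical
  refine ⟨matrixSupport A,
    ∑ m : matrixSupport A, toLin' (A.map fun a => a.coeff m) ∘ₗ LinearMap.proj m, fun c g => ?_⟩
  rw [matrixConvolution_apply_eq_sum (support_subset_matrixSupport A), ← Finset.sum_coe_sort]
  simp

theorem exists_matrixConvolution_eq {τ : (G → Fin n → K) → G → Fin n → K}
    (hτ : IsLinearCellularAutomaton G K n τ) :
    ∃ A : Matrix (Fin n) (Fin n) (MonoidAlgebra K G), ⇑(matrixConvolution A) = τ := by
  classical
  obtain ⟨M, μ, hμ⟩ := hτ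
  let B (m : M) : Matrix (Fin n) (Fin n) K :=
    LinearMap.toMatrix' (μ ∘ₗ LinearMap.single K (fun _ : M => Fin n → K) m)
  refine ⟨∑ m : M, (B m).map (single (m : G)), ?_⟩
  funext c g
  calc matrixConvolution (∑ m : M, (B m).map (single (m : G))) c g
      = ∑ m : M, μ (Pi.single m (c (g * m))) := by
        simp [matrixConvolution_map_single, B]
    _ = τ c g := by rw [← map_sum, Finset.univ_sum_single, hμ]

end CellularAutomaton

theorem matrix_groupRing_iso_LCA_general {G : Type} [Group G] {K : Type} [Field K]
    (n : ℕ) :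
    ∃ ψ : Matrix (Fin n) (Fin n) (MonoidAlgebra K G) ≃
        {τ : (G → (Fin n → K)) → (G → (Fin n → K)) //
          IsLinearCellularAutomaton G K n τ},
      (∀ a b, (ψ (a * b)).1 = (ψ a).1 ∘ (ψ b).1) ∧
      (∀ a b, ∀ c : G → (Fin n → K), (ψ (a + b)).1 c = (ψ a).1 c + (ψ b).1 c) ∧
      (ψ 1).1 = id := by
  let ψ (A : Matrix (Fin n) (Fin n) (MonoidAlgebra K G)) :
      {τ // IsLinearCellularAutomaton G K n τ} :=
    ⟨matrixConvolution A, isLinearCellularAutomaton_matrixConvolution A⟩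
  have hψ : Function.Bijective ψ := by
    refine ⟨fun A B h => matrixConvolution_injective (DFunLike.coe_injective congr($h.1)), ?_⟩
    rintro ⟨τ, hτ⟩
    obtain ⟨A, hA⟩ := exists_matrixConvolution_eq hτ
    exact ⟨A, Subtype.ext hA⟩
  refine ⟨Equiv.ofBijective ψ hψ, fun a b => ?_, fun a b c => ?_, ?_⟩
  · exact congr(⇑$(map_mul matrixConvolution a b))
  · exact congr(⇑$(map_add matrixConvolution a b) c)
  · exact congr(⇑$(map_one matrixConvolution))

/-- There is a ring isomorphism `Mat_n(K[G]) ≅ LCA(G, K^n)`: a bijection `ψ`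
from `n×n` matrices over the group ring onto the set of linear cellular
automata `(K^n)^G → (K^n)^G`, sending products to compositions, sums to
pointwise sums, and `1` to the identity. -/
theorem matrix_groupRing_iso_LCA {G : Type} [Group G] {K : Type} [Field K]
    (n : ℕ) (hn : 1 ≤ n) :
    ∃ ψ : Matrix (Fin n) (Fin n) (MonoidAlgebra K G) ≃
        {τ : (G → (Fin n → K)) → (G → (Fin n → K)) //
          IsLinearCellularAutomaton G K n τ},
      (∀ a b, (ψ (a * b)).1 = (ψ a).1 ∘ (ψ b).1) ∧
      (∀ a b, ∀ c : G → (Fin n → K), (ψ (a + b)).1 c = (ψ a).1 c + (ψ b).1 c) ∧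
      (ψ 1).1 = id :=
  matrix_groupRing_iso_LCA_general n
end

section
/- Let f : X → Y be a morphism of finite type of schemes with Y Jacobson. Then X is Jacobson, and for every closed point x ∈ X, f(x) is a closed point of Y and the residue field extension κ(f(x)) ⊆ κ(x) is finite. -/
open AlgebraicGeometry CategoryTheory

/-- `Spec κ(x) ⟶ Spec κ(f x)` is of finite type, being the first factor of
`Spec κ(x) ⟶ X ⟶ Y`, so Zariski's lemma makes `κ(f x) ⟶ κ(x)` finite. -/
lemma AlgebraicGeometry.Scheme.Hom.finite_residueFieldMap_of_isClosed {X Y : Scheme}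
    (f : X ⟶ Y) [LocallyOfFiniteType f] {x : X} (hx : IsClosed ({x} : Set X)) :
    (f.residueFieldMap x).hom.Finite := by
  have := isClosed_singleton_iff_isClosedImmersion.mp hx
  have : LocallyOfFiniteType (Spec.map (f.residueFieldMap x) ≫ Y.fromSpecResidueField _) := by
    rw [Scheme.Hom.SpecMap_residueFieldMap_fromSpecResidueField]
    infer_instance
  have := locallyOfFiniteType_of_comp (Spec.map (f.residueFieldMap x)) (Y.fromSpecResidueField _)
  exact RingHom.finite_iff_finiteType_of_isJacobsonRing.mpr (HasRingHomProperty.Spec_iff.mp this)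

theorem jacobson_of_finiteType_general {X Y : Scheme} (f : X ⟶ Y)
    [LocallyOfFiniteType f]
    (hY : JacobsonSpace Y) :
    JacobsonSpace X ∧
    ∀ x : X, IsClosed ({x} : Set X) →
      IsClosed ({f.base x} : Set Y) ∧ (f.residueFieldMap x).hom.Finite := by
  have := hY
  exact ⟨LocallyOfFiniteType.jacobsonSpace f, fun _ hx ↦
    ⟨f.closePoints_subset_preimage_closedPoints hx, f.finite_residueFieldMap_of_isClosed hx⟩⟩

/-- If `f : X → Y` is a morphism of schemes of finite type and `Y` is
Jacobson, then `X` is Jacobson, every closed point `x ∈ X` maps to a closed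
point `f(x) ∈ Y`, and the residue field extension `κ(f(x)) ⊆ κ(x)` is
finite. -/
theorem jacobson_of_finiteType {X Y : Scheme} (f : X ⟶ Y)
    [LocallyOfFiniteType f] [QuasiCompact f]
    (hY : JacobsonSpace Y) :
    JacobsonSpace X ∧
    ∀ x : X, IsClosed ({x} : Set X) →
      IsClosed ({f.base x} : Set Y) ∧ (f.residueFieldMap x).hom.Finite :=
  jacobson_of_finiteType_general f hY
end
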